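/- Let K = F_{2^m}, let φ be a field automorphism of K, let 2 ≤ k ≤ m, let u_{1,1} ∈ K, and for 2 ≤ i ≤ k let u_{i,1}, u_{i,2} ∈ K satisfy u_{i,1} = φ(u_{i,2}) and Tr_{2^m/2}(φ^{−1}(u_{1,1})·u_{i,2}) = 0. Let R : F_2^{k−1} → F_2 be any function and define F : K × K → K × K by F(y,z) = (y·φ(z), z) + R(Tr_{2^m/2}(u_{2,1}y + u_{2,2}z), …, Tr_{2^m/2}(u_{k,1}y + u_{k,2}z))·(u_{1,1}·y, 0), the value of R being identified with 0 or 1 in K. Then for every (a,b) ∈ K × K with a ≠ 0, the component function F_{(a,b)}(y,z) = Tr_{2^m/2}(a·(yφ(z) + R(…)·u_{1,1}y)) + Tr_{2^m/2}(b·z) is bent on K × K. -/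

import Mathlib

open scoped Classical BigOperators

noncomputable section

/-- The finite field `K = F_{2^m}`. -/
abbrev K (m : ℕ) := GaloisField 2 m

noncomputable instance (m : ℕ) : Fintype (K m) := Fintype.ofFinite _

/-- The absolute trace `Tr_{2^m/2}` of `K`, viewed as an element of `K`
(its values lie in the prime field `{0,1}`). -/
def trm (m : ℕ) (x : K m) : K m := ∑ j ∈ Finset.range m, x ^ 2 ^ j

/-- `(-1)^b` for `b ∈ {0,1} ⊆ K`. -/
def chiK (m : ℕ) (x : K m) : ℤ := if x = 0 then 1 else -1

/-- The inner product `⟨(y₁,z₁),(y₂,z₂)⟩ = Tr(y₁y₂) + Tr(z₁z₂)` on `V = K × K`. -/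
def ip (m : ℕ) (w v : K m × K m) : K m := trm m (w.1 * v.1) + trm m (w.2 * v.2)

/-- The Walsh transform of a Boolean-valued function on `V = K × K`. -/
def walshV (m : ℕ) (f : K m × K m → K m) (w : K m × K m) : ℤ :=
  ∑ v : K m × K m, chiK m (f v + ip m w v)

/-!
Substituting `z = v + φ⁻¹ y` puts the component function in Maiorana–McFarland form
`Tr(π(v) y) + Tr(b v)`. Indeed, since `u_{i,1} = φ(u_{i,2})` the arguments of `R` become
`T(v) = (Tr(u_{i,2} v))ᵢ`, and `Tr(a y²) = Tr(√a y)` is linear in `y`; this leaves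
`π(v) = a φ(σ v) + const` with `σ v = v + φ⁻¹(R(T v) u₁₁)`. The condition
`Tr(φ⁻¹(u₁₁) u_{i,2}) = 0` makes `T` invariant under `σ`, so `σ` is an involution, `π` is a
permutation, and every Walsh value is `±2^m`.
-/

section Trace

variable {m : ℕ}

lemma trm_eq_algebraMap_trace (hm : 1 ≤ m) (x : K m) :
    trm m x = algebraMap (ZMod 2) (K m) (Algebra.trace (ZMod 2) (K m) x) := by
  rw [FiniteField.algebraMap_trace_eq_sum_pow, GaloisField.finrank 2 (by omega), Nat.card_zmod]
  rfl

lemma trm_add (x y : K m) : trm m (x + y) = trm m x + trm m y := by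
  simp only [trm, add_pow_char_pow, Finset.sum_add_distrib]

lemma trm_eq_zero_or_eq_one (hm : 1 ≤ m) (x : K m) : trm m x = 0 ∨ trm m x = 1 := by
  rw [trm_eq_algebraMap_trace hm]
  generalize Algebra.trace (ZMod 2) (K m) x = t
  fin_cases t
  · exact .inl (map_zero _)
  · exact .inr (map_one _)

lemma trm_sq (hm : 1 ≤ m) (x : K m) : trm m (x ^ 2) = trm m x := by
  have hsq : trm m (x ^ 2) = trm m x ^ 2 := by
    simp only [trm, sum_pow_char, ← pow_mul, mul_comm]
  rcases trm_eq_zero_or_eq_one hm x with h | h <;> simp [hsq, h]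

lemma trm_map_ringEquiv (hm : 1 ≤ m) (φ : K m ≃+* K m) (x : K m) : trm m (φ x) = trm m x := by
  have h : trm m (φ x) = φ (trm m x) := by simp only [trm, map_sum, map_pow]
  rcases trm_eq_zero_or_eq_one hm x with h' | h' <;> simp [h, h']

lemma trm_mul_ringEquiv_symm (hm : 1 ≤ m) (φ : K m ≃+* K m) (x y : K m) :
    trm m (x * φ.symm y) = trm m (φ x * y) := by
  rw [← trm_map_ringEquiv hm φ, map_mul, RingEquiv.apply_symm_apply]

lemma exists_trm_eq_one (hm : 1 ≤ m) : ∃ x : K m, trm m x = 1 := by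
  obtain ⟨x, hx⟩ := Algebra.trace_surjective (ZMod 2) (K m) 1
  exact ⟨x, by rw [trm_eq_algebraMap_trace hm, hx, map_one]⟩

lemma card_K (hm : 1 ≤ m) : Fintype.card (K m) = 2 ^ m := by
  rw [Fintype.card_eq_nat_card, GaloisField.card 2 m (by omega)]

end Trace

section Character

variable {m : ℕ}

lemma chiK_add {x y : K m} (hx : x = 0 ∨ x = 1) (hy : y = 0 ∨ y = 1) :
    chiK m (x + y) = chiK m x * chiK m y := by
  rcases hx with rfl | rfl <;> rcases hy with rfl | rfl <;> simp [chiK, CharTwo.add_self_eq_zero]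

lemma chiK_mul_self (x : K m) : chiK m x * chiK m x = 1 := by
  unfold chiK; split_ifs <;> norm_num

def trmChar (hm : 1 ≤ m) (d : K m) : AddChar (K m) ℤ where
  toFun y := chiK m (trm m (d * y))
  map_zero_eq_one' := by simp [trm, chiK, zero_pow]
  map_add_eq_mul' y₁ y₂ := by
    rw [mul_add, trm_add]
    exact chiK_add (trm_eq_zero_or_eq_one hm _) (trm_eq_zero_or_eq_one hm _)

lemma trmChar_eq_zero_iff (hm : 1 ≤ m) (d : K m) : trmChar hm d = 0 ↔ d = 0 := by
  refine ⟨fun h => ?_, fun h => ?_⟩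
  · by_contra hd
    obtain ⟨x, hx⟩ := exists_trm_eq_one hm
    have := congrArg (· (d⁻¹ * x)) h
    simp [trmChar, ← mul_assoc, mul_inv_cancel₀ hd, hx, chiK] at this
  · ext y
    simp [trmChar, h, trm, chiK, zero_pow]

lemma sum_chiK_trm_mul (hm : 1 ≤ m) (d : K m) :
    ∑ y, chiK m (trm m (d * y)) = if d = 0 then 2 ^ m else 0 := by
  have h := AddChar.sum_eq_ite (trmChar hm d)
  simp only [trmChar_eq_zero_iff, card_K hm] at h
  exact_mod_cast h

end Character

lemma sum_sum_chiK_trm_perm_mul_add {m : ℕ} (hm : 1 ≤ m) (π : Equiv.Perm (K m)) (g : K m → K m)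
    (hg : ∀ v, g v = 0 ∨ g v = 1) :
    ∑ v, ∑ y, chiK m (trm m (π v * y) + g v) = 2 ^ m * chiK m (g (π.symm 0)) := by
  have hinner : ∀ v, ∑ y, chiK m (trm m (π v * y) + g v)
      = (if π v = 0 then 2 ^ m else 0) * chiK m (g v) := fun v => by
    simp_rw [chiK_add (trm_eq_zero_or_eq_one hm _) (hg v), ← Finset.sum_mul,
      sum_chiK_trm_mul hm]
  simp_rw [hinner]
  rw [← Equiv.sum_comp π.symm]
  simp

lemma Function.involutive_add_comp {G X : Type*} [AddMonoid G] (h2 : ∀ x : G, x + x = 0)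
    {T : G → X} {ρ : X → G} (hT : ∀ v x, T (v + ρ x) = T v) :
    Function.Involutive fun v => v + ρ (T v) := fun v => by
  simp only [hT, add_assoc, h2, add_zero]

section Shear

variable {m : ℕ} (φ : K m ≃+* K m)

lemma trm_mul_add_ringEquiv_symm {r c u : K m} (hr : r = 0 ∨ r = 1)
    (hc : trm m (φ.symm c * u) = 0) (v : K m) :
    trm m (u * (v + φ.symm (r * c))) = trm m (u * v) := by
  rcases hr with rfl | rfl
  · simp
  · rw [one_mul, mul_add, trm_add, mul_comm u (φ.symm c), hc, add_zero]

variable (hm : 1 ≤ m)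
include hm

lemma trm_shear {u₁ u₂ : K m} (hu : u₁ = φ u₂) (y v : K m) :
    trm m (u₁ * y + u₂ * (v + φ.symm y)) = trm m (u₂ * v) := by
  rw [hu, mul_add, trm_add, trm_add, trm_mul_ringEquiv_symm hm, add_left_comm,
    CharTwo.add_self_eq_zero, add_zero]

lemma ip_shear {a s : K m} (hs : a = s * s) (b u r : K m) (w : K m × K m) (y v : K m) :
    ip m (a, b) (y * φ (v + φ.symm y) + r * (u * y), v + φ.symm y) + ip m w (y, v + φ.symm y)
      = trm m ((a * (φ v + r * u) + (s + φ b + w.1 + φ w.2)) * y) + trm m ((b + w.2) * v) := by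
  have hsq : a * (y * y) = (s * y) ^ 2 := by rw [hs]; ring
  simp only [ip, map_add, RingEquiv.apply_symm_apply, mul_add, add_mul, trm_add, hsq,
    trm_sq hm, trm_mul_ringEquiv_symm hm]
  ring_nf

end Shear

theorem stmt11_general (m k : ℕ) (hm : 1 ≤ m)
    (φ : K m ≃+* K m)
    (u₁₁ : K m) (uf1 uf2 : ℕ → K m)
    (hu : ∀ i, 2 ≤ i → i ≤ k →
      uf1 i = φ (uf2 i) ∧ trm m (φ.symm u₁₁ * uf2 i) = 0)
    (R : (Fin (k-1) → K m) → K m) (hR : ∀ v, R v = 0 ∨ R v = 1)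
    (F : K m × K m → K m × K m)
    (hF : ∀ y z : K m, F (y, z) =
      (y * φ z
        + R (fun j => trm m (uf1 (j.1 + 2) * y + uf2 (j.1 + 2) * z)) * (u₁₁ * y),
       z)) :
    ∀ a b : K m, a ≠ 0 →
      ∀ w : K m × K m, (walshV m (fun v => ip m (a, b) (F v)) w) ^ 2 = 2 ^ (2*m) := by
  intro a b ha w
  obtain ⟨s, hs⟩ := FiniteField.isSquare_of_char_two (ringChar.eq (K m) 2) a
  have huj (j : Fin (k - 1)) := hu (j.1 + 2) (by omega) (by omega)
  set T : K m → Fin (k - 1) → K m := fun v j => trm m (uf2 (j.1 + 2) * v)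
  have hσ : Function.Involutive fun v => v + φ.symm (R (T v) * u₁₁) :=
    Function.involutive_add_comp (T := T) (ρ := fun x => φ.symm (R x * u₁₁))
      CharTwo.add_self_eq_zero fun v x =>
      funext fun j => trm_mul_add_ringEquiv_symm φ (hR x) (huj j).2 v
  let π : Equiv.Perm (K m) := (hσ.toPerm _).trans <| φ.toEquiv.trans <|
    (Equiv.mulLeft₀ a ha).trans (Equiv.addRight (s + φ b + w.1 + φ w.2))
  have hshear (y v : K m) : ip m (a, b) (F (y, v + φ.symm y)) + ip m w (y, v + φ.symm y)
      = trm m (π v * y) + trm m ((b + w.2) * v) := by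
    have harg : (fun j : Fin (k - 1) => trm m (uf1 (j.1 + 2) * y + uf2 (j.1 + 2) * (v + φ.symm y)))
        = T v := funext fun j => trm_shear φ hm (huj j).1 y v
    rw [hF, harg, ip_shear φ hm hs]
    show _ = trm m ((a * φ (v + φ.symm (R (T v) * u₁₁)) + (s + φ b + w.1 + φ w.2)) * y) + _
    rw [map_add, RingEquiv.apply_symm_apply]
  have hW : walshV m (fun v => ip m (a, b) (F v)) w
      = 2 ^ m * chiK m (trm m ((b + w.2) * π.symm 0)) := by
    rw [walshV, Fintype.sum_prod_type,
      ← sum_sum_chiK_trm_perm_mul_add hm π _ fun v => trm_eq_zero_or_eq_one hm _]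
    conv_rhs => rw [Finset.sum_comm]
    refine Fintype.sum_congr _ _ fun y => ?_
    rw [← Equiv.sum_comp (Equiv.addRight (φ.symm y))]
    simp only [Equiv.coe_addRight, hshear]
  rw [hW, mul_pow, sq (chiK _ _), chiK_mul_self, mul_one, ← pow_mul']

/-- the Maiorana–McFarland based construction
`F(y,z) = (y·φ(z), z) + R(Tr(u_{2,1}y+u_{2,2}z), …, Tr(u_{k,1}y+u_{k,2}z))·(u_{1,1}y, 0)`
has all its components `F_{(a,b)}`, `a ≠ 0`, bent. -/
theorem stmt11 (m k : ℕ) (hm : 1 ≤ m) (hk2 : 2 ≤ k) (hkm : k ≤ m)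
    (φ : K m ≃+* K m)
    (u₁₁ : K m) (uf1 uf2 : ℕ → K m)
    (hu : ∀ i, 2 ≤ i → i ≤ k →
      uf1 i = φ (uf2 i) ∧ trm m (φ.symm u₁₁ * uf2 i) = 0)
    (R : (Fin (k-1) → K m) → K m) (hR : ∀ v, R v = 0 ∨ R v = 1)
    (F : K m × K m → K m × K m)
    (hF : ∀ y z : K m, F (y, z) =
      (y * φ z
        + R (fun j => trm m (uf1 (j.1 + 2) * y + uf2 (j.1 + 2) * z)) * (u₁₁ * y),
       z)) :
    ∀ a b : K m, a ≠ 0 →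
      ∀ w : K m × K m, (walshV m (fun v => ip m (a, b) (F v)) w) ^ 2 = 2 ^ (2*m) :=
  stmt11_general m k hm φ u₁₁ uf1 uf2 hu R hR F hF
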